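/- Let r₁, r₂ ≥ 0 be integers and N = r₁ + 2r₂. Let ε₁, …, ε_{r₁} ∈ {0,1}, let k₁ ≥ k₂ ≥ … ≥ k_{r₂} be integers with each k_j ≥ 2, and let s₁, …, s_{r₁+r₂} ∈ ℂ. For 1 ≤ i < k ≤ r₁ let ε_{ik} ∈ {0,1} with ε_{ik} ≡ ε_i + ε_k (mod 2), and for j ≤ r₂ let ε′_j ∈ {0,1} with ε′_j ≡ k_j (mod 2). Define L_∞(s) := [∏_{j=1}^{r₂} Γ_ℝ(s + 2s_{r₁+j} + ε′_j)] · [∏_{i ≤ r₁, j ≤ r₂} Γ_ℂ(s + s_i + s_{r₁+j} + (k_j−1)/2)] · [∏_{1 ≤ i < k ≤ r₁} Γ_ℝ(s + s_i + s_k + ε_{ik})] · [∏_{1 ≤ j < ℓ ≤ r₂} Γ_ℂ(s + s_{r₁+j} + s_{r₁+ℓ} + (k_j + k_ℓ − 2)/2) · Γ_ℂ(s + s_{r₁+j} + s_{r₁+ℓ} + (k_j − k_ℓ)/2)], and let L̃_∞(s) be the same expression with every s_i replaced by −s_i. Define λ ∈ ℂ^N and δ ∈ {0,1}^N by: λ_i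 = −s_i and δ_i = ε_i for 1 ≤ i ≤ r₁; λ_{r₁+2j−1} = −s_{r₁+j} − (k_j−1)/2, λ_{r₁+2j} = −s_{r₁+j} + (k_j−1)/2, δ_{r₁+2j−1} = ε′_j, δ_{r₁+2j} = 0 for 1 ≤ j ≤ r₂. Set ω := ∏_{1 ≤ i < k ≤ r₁} i^{−ε_{ik}} · ∏_{j=1}^{r₂} i^{k_j(2j−N) − ε′_j}. Then for every s ∈ ℂ such that s − λ_i − λ_j ∉ ℤ for all 1 ≤ i < j ≤ N, one has L_∞(s) = ω · L̃_∞(1−s) · ∏_{1 ≤ i < j ≤ N} G_{δ_i + δ_j mod 2}(s − λ_i − λ_j). -/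

import Mathlib

/-- `Γ_ℝ(s) = π^{-s/2} Γ(s/2)`. -/
noncomputable def GammaR (s : ℂ) : ℂ :=
  (Real.pi : ℂ) ^ (-s / 2) * Complex.Gamma (s / 2)

/-- `Γ_ℂ(s) = 2 (2π)^{-s} Γ(s)`. -/
noncomputable def GammaC (s : ℂ) : ℂ := 2 * (2 * (Real.pi : ℂ)) ^ (-s) * Complex.Gamma s

/-- `G₀(s) = 2 (2π)^{−s} Γ(s) cos(πs/2)`. -/
noncomputable def G0 (s : ℂ) : ℂ :=
  2 * (2 * (Real.pi : ℂ)) ^ (-s) * Complex.Gamma s * Complex.cos ((Real.pi : ℂ) * s / 2)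

/-- `G₁(s) = 2i (2π)^{−s} Γ(s) sin(πs/2)`. -/
noncomputable def G1 (s : ℂ) : ℂ :=
  2 * Complex.I * (2 * (Real.pi : ℂ)) ^ (-s) * Complex.Gamma s *
    Complex.sin ((Real.pi : ℂ) * s / 2)

/-- `G_δ` for `δ` of a given parity. -/
noncomputable def Gd (d : ℕ) (s : ℂ) : ℂ := if d % 2 = 0 then G0 s else G1 s

/-- The archimedean `L`-factor
`L_∞(s) = [∏_j Γ_ℝ(s + 2s_{r₁+j} + ε′_j)] · [∏_{i,j} Γ_ℂ(s + s_i + s_{r₁+j} + (k_j−1)/2)]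
 · [∏_{i<k} Γ_ℝ(s + s_i + s_k + ε_{ik})]
 · [∏_{j<ℓ} Γ_ℂ(s + s_{r₁+j} + s_{r₁+ℓ} + (k_j+k_ℓ−2)/2) Γ_ℂ(s + s_{r₁+j} + s_{r₁+ℓ} + (k_j−k_ℓ)/2)]`,
with `s1 : Fin r₁ → ℂ` the parameters `s_1,…,s_{r₁}` and `s2 : Fin r₂ → ℂ` the
parameters `s_{r₁+1},…,s_{r₁+r₂}`. -/
noncomputable def LInf (r₁ r₂ : ℕ) (ε' : Fin r₂ → ℕ) (E : Fin r₁ → Fin r₁ → ℕ)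
    (k : Fin r₂ → ℕ) (s1 : Fin r₁ → ℂ) (s2 : Fin r₂ → ℂ) (s : ℂ) : ℂ :=
  (∏ j : Fin r₂, GammaR (s + 2 * s2 j + (ε' j : ℂ))) *
  (∏ i : Fin r₁, ∏ j : Fin r₂, GammaC (s + s1 i + s2 j + ((k j : ℂ) - 1) / 2)) *
  (∏ p ∈ Finset.univ.filter (fun p : Fin r₁ × Fin r₁ => p.1 < p.2),
      GammaR (s + s1 p.1 + s1 p.2 + (E p.1 p.2 : ℂ))) *
  (∏ p ∈ Finset.univ.filter (fun p : Fin r₂ × Fin r₂ => p.1 < p.2),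
      GammaC (s + s2 p.1 + s2 p.2 + ((k p.1 : ℂ) + (k p.2 : ℂ) - 2) / 2) *
      GammaC (s + s2 p.1 + s2 p.2 + ((k p.1 : ℂ) - (k p.2 : ℂ)) / 2))

/-!
Index `1, …, N` by the lexicographic sum of the `r₁` real places and `r₂` blocks `{0, 1}`:
position `r₁ + 2j + t` is `(j, t)`. The pairs `i < j` then split into four families (real–real,
real–complex, the pair inside one complex block, pairs from two different complex blocks), which
match the four products in `L_∞` factor by factor. Each factor is moved from `s` to `1 - s` by
a reflection formula. For `e ∈ {0, 1}` and `d ≡ e`, `Γ_ℝ(z + e) = i^{-e} G_d(z) Γ_ℝ(1 - z + e)`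
(Mathlib's `Γ_ℝ` reflection formulas). Writing `G_d = Γ_ℂ · c_d` with `c_0(s) = cos(πs/2)`,
`c_1(s) = i sin(πs/2)`, one has `c_d(s + n) = i^n c_{d+n}(s)` and `c_d c_{d+1} = i sin(πs)/2`, so
Euler's reflection formula gives `Γ_ℂ(w + k - 1) = i^{-k} G_d(w + k - 1) G_{d'}(w) Γ_ℂ(1 - w)`
whenever `d + d' + k` is even. The powers of `i` collected along the way multiply to `ω`.
-/

open Complex Finset
open scoped Real

section PairProd

variable {ι κ M : Type*} [CommMonoid M]

def pairProd [Fintype ι] [LinearOrder ι] (f : ι → ι → M) : M :=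
  ∏ p ∈ univ.filter (fun p : ι × ι => p.1 < p.2), f p.1 p.2

lemma pairProd_eq_prod_ite [Fintype ι] [LinearOrder ι] (f : ι → ι → M) :
    pairProd f = ∏ i, ∏ j, if i < j then f i j else 1 := by
  rw [pairProd, prod_filter, Fintype.prod_prod_type]

lemma pairProd_mul [Fintype ι] [LinearOrder ι] (f g : ι → ι → M) :
    pairProd (fun i j => f i j * g i j) = pairProd f * pairProd g :=
  prod_mul_distrib

lemma pairProd_congr [Fintype ι] [LinearOrder ι] {f g : ι → ι → M}
    (h : ∀ i j, i < j → f i j = g i j) : pairProd f = pairProd g :=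
  prod_congr rfl fun p hp => h p.1 p.2 (mem_filter.1 hp).2

lemma pairProd_orderIso [Fintype ι] [LinearOrder ι] [Fintype κ] [LinearOrder κ] (e : ι ≃o κ)
    (f : κ → κ → M) : pairProd f = pairProd fun i j => f (e i) (e j) := by
  rw [pairProd_eq_prod_ite, pairProd_eq_prod_ite]
  refine (Fintype.prod_equiv e.toEquiv _ _ fun i => ?_).symm
  refine Fintype.prod_equiv e.toEquiv _ _ fun j => ?_
  simp [e.lt_iff_lt]

lemma Fintype.prod_lex [Fintype ι] (f : Lex ι → M) : ∏ x, f x = ∏ i, f (toLex i) :=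
  (toLex.prod_comp f).symm

lemma pairProd_sumLex [Fintype ι] [LinearOrder ι] [Fintype κ] [LinearOrder κ]
    (f : ι ⊕ₗ κ → ι ⊕ₗ κ → M) :
    pairProd f = pairProd (fun i i' => f (toLex (.inl i)) (toLex (.inl i'))) *
      (∏ i, ∏ k, f (toLex (.inl i)) (toLex (.inr k))) *
      pairProd (fun k k' => f (toLex (.inr k)) (toLex (.inr k'))) := by
  simp only [pairProd_eq_prod_ite, Fintype.prod_lex, Fintype.prod_sum_type, Sum.Lex.inl_lt_inl_iff,
    Sum.Lex.inr_lt_inr_iff, Sum.Lex.inl_lt_inr, Sum.Lex.not_inr_lt_inl, if_true, if_false,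
    prod_const_one, prod_mul_distrib]
  ac_rfl

lemma pairProd_prodLex [Fintype ι] [LinearOrder ι] [Fintype κ] [LinearOrder κ]
    (f : ι ×ₗ κ → ι ×ₗ κ → M) :
    pairProd f = pairProd (fun i i' => ∏ k, ∏ k', f (toLex (i, k)) (toLex (i', k'))) *
      ∏ i, pairProd (fun k k' => f (toLex (i, k)) (toLex (i, k'))) := by
  have hsplit : ∀ (i i' : ι) (k k' : κ) (x : M),
      (if i < i' ∨ i = i' ∧ k < k' then x else 1) =
        (if i < i' then x else 1) * (if i = i' then (if k < k' then x else 1) else 1) := by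
    intro i i' k k' x
    rcases lt_trichotomy i i' with h | rfl | h
    · simp [h, h.ne]
    · simp
    · simp [h.not_gt, h.ne']
  simp only [pairProd_eq_prod_ite, Fintype.prod_lex, Fintype.prod_prod_type,
    Prod.Lex.toLex_lt_toLex, hsplit, prod_mul_distrib, prod_ite_irrel, prod_const_one,
    prod_ite_eq, mem_univ, if_true]
  congr 1
  refine prod_congr rfl fun i _ => ?_
  rw [prod_comm]
  refine prod_congr rfl fun j _ => ?_
  split_ifs <;> simp

lemma pairProd_fin_two (f : Fin 2 → Fin 2 → M) : pairProd f = f 0 1 := by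
  simp [pairProd_eq_prod_ite, Fin.prod_univ_two]

lemma pairProd_const_right [Fintype ι] [LinearOrder ι] [LocallyFiniteOrderTop ι] (g : ι → M) :
    pairProd (fun i (_ : ι) => g i) = ∏ i, g i ^ #(Ioi i) := by
  simp only [pairProd_eq_prod_ite, ← prod_filter, filter_lt_eq_Ioi, prod_const]

end PairProd

lemma GammaR_eq_Gammaℝ : GammaR = Gammaℝ := rfl

lemma GammaC_eq_Gammaℂ : GammaC = Gammaℂ := rfl

lemma G1_eq (s : ℂ) : G1 s = Gammaℂ s * (I * sin (π * s / 2)) := by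
  rw [G1, Gammaℂ_def]; ring

noncomputable def parityFactor (d : ℕ) (s : ℂ) : ℂ :=
  if d % 2 = 0 then cos (π * s / 2) else I * sin (π * s / 2)

lemma Gd_eq_Gammaℂ_mul (d : ℕ) (s : ℂ) : Gd d s = Gammaℂ s * parityFactor d s := by
  unfold Gd parityFactor
  split_ifs
  · rfl
  · exact G1_eq s

lemma Gd_eq_of_mod_two_eq {d d' : ℕ} (h : d % 2 = d' % 2) : Gd d = Gd d' := by
  unfold Gd; rw [h]

lemma parityFactor_add_one (d : ℕ) (s : ℂ) :
    parityFactor d (s + 1) = I * parityFactor (d + 1) s := by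
  have hcos : cos (π * (s + 1) / 2) = -sin (π * s / 2) := by
    rw [show π * (s + 1) / 2 = π * s / 2 + π / 2 by ring, cos_add_pi_div_two]
  have hsin : sin (π * (s + 1) / 2) = cos (π * s / 2) := by
    rw [show π * (s + 1) / 2 = π * s / 2 + π / 2 by ring, sin_add_pi_div_two]
  rcases Nat.mod_two_eq_zero_or_one d with h | h
  · simp [parityFactor, h, Nat.add_mod, hcos, ← mul_assoc]
  · simp [parityFactor, h, Nat.add_mod, hsin]

lemma parityFactor_add_nat (d n : ℕ) (s : ℂ) :
    parityFactor d (s + n) = I ^ n * parityFactor (d + n) s := by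
  induction n generalizing s with
  | zero => simp
  | succ n ih =>
    rw [Nat.cast_succ, add_comm (n : ℂ), ← add_assoc, ih, parityFactor_add_one, ← add_assoc]
    ring

lemma parityFactor_mul_parityFactor {d d' : ℕ} (h : (d + d') % 2 = 1) (s : ℂ) :
    parityFactor d s * parityFactor d' s = I * sin (π * s) / 2 := by
  have hsin : sin (π * s) = 2 * sin (π * s / 2) * cos (π * s / 2) := by
    rw [← sin_two_mul]; ring_nf
  rcases Nat.mod_two_eq_zero_or_one d with hd | hd
  · have hd' : d' % 2 = 1 := by omega
    simp only [parityFactor, hd, hd', if_true, one_ne_zero, if_false, hsin]; ring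
  · have hd' : d' % 2 = 0 := by omega
    simp only [parityFactor, hd, hd', if_true, one_ne_zero, if_false, hsin]; ring

lemma Gammaℂ_mul_Gammaℂ_one_sub (s : ℂ) : Gammaℂ s * Gammaℂ (1 - s) = 2 / sin (π * s) := by
  have hπ : (π : ℂ) ≠ 0 := ofReal_ne_zero.mpr Real.pi_ne_zero
  have hpow : (2 * π : ℂ) ^ (-s) * (2 * π : ℂ) ^ (-(1 - s)) = ((2 : ℂ) * π)⁻¹ := by
    rw [← cpow_add _ _ (mul_ne_zero two_ne_zero hπ), show -s + -(1 - s) = -1 by ring, cpow_neg_one]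
  calc Gammaℂ s * Gammaℂ (1 - s)
      = 4 * ((2 * π : ℂ) ^ (-s) * (2 * π : ℂ) ^ (-(1 - s))) * (Gamma s * Gamma (1 - s)) := by
        simp only [Gammaℂ_def]; ring
    _ = 2 / sin (π * s) := by
        rw [hpow, Gamma_mul_Gamma_one_sub]
        field_simp
        ring

lemma Gammaℂ_add_sub_one_eq_Gd_mul_Gd {k d d' : ℕ} (hk : 1 ≤ k) (h : (d + d' + k) % 2 = 0) {w : ℂ}
    (hw : w ∈ integerComplement) :
    Gammaℂ (w + (k - 1)) = I ^ (-(k : ℤ)) * Gd d (w + (k - 1)) * Gd d' w * Gammaℂ (1 - w) := by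
  obtain ⟨n, rfl⟩ : ∃ n, k = n + 1 := ⟨k - 1, by omega⟩
  have hprod := parityFactor_mul_parityFactor (d := d + n) (d' := d') (by omega) w
  have hI : I ^ (-((n + 1 : ℕ) : ℤ)) * (I ^ n * I) = 1 := by
    rw [← pow_succ, zpow_neg, zpow_natCast, inv_mul_cancel₀ (pow_ne_zero _ I_ne_zero)]
  have hsin : sin (π * w) / 2 * (2 / sin (π * w)) = 1 := by
    field_simp [sin_pi_mul_ne_zero hw]
  rw [Nat.cast_succ, add_sub_cancel_right, Gd_eq_Gammaℂ_mul, Gd_eq_Gammaℂ_mul, parityFactor_add_nat]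
  calc Gammaℂ (w + n)
      = Gammaℂ (w + n) * (I ^ (-((n + 1 : ℕ) : ℤ)) * (I ^ n * I)) *
          (sin (π * w) / 2 * (2 / sin (π * w))) := by
        rw [hI, hsin, mul_one, mul_one]
    _ = Gammaℂ (w + n) * (I ^ (-((n + 1 : ℕ) : ℤ)) * I ^ n) *
          (parityFactor (d + n) w * parityFactor d' w) * (Gammaℂ w * Gammaℂ (1 - w)) := by
        rw [hprod, Gammaℂ_mul_Gammaℂ_one_sub]; ring
    _ = _ := by ring

lemma Gammaℝ_eq_G0_mul {z : ℂ} (hz : z ∈ integerComplement) :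
    Gammaℝ z = G0 z * Gammaℝ (1 - z) := by
  have hz' : ∀ m : ℤ, z ≠ m := fun m h => hz ⟨m, h.symm⟩
  have hne : Gammaℝ (1 - z) ≠ 0 := by
    rw [Ne, Gammaℝ_eq_zero_iff]
    rintro ⟨n, hn⟩
    exact hz' (2 * n + 1) (by push_cast; linear_combination -hn)
  rw [← div_eq_iff hne,
    Gammaℝ_div_Gammaℝ_one_sub fun n hn => hz' (-(2 * n + 1)) (by simpa using hn)]
  rfl

lemma Gammaℝ_add_one_eq_G1_mul {z : ℂ} (hz : z ∈ integerComplement) :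
    Gammaℝ (z + 1) = I ^ (-1 : ℤ) * G1 z * Gammaℝ (1 - z + 1) := by
  have hz' : ∀ m : ℤ, z ≠ m := fun m h => hz ⟨m, h.symm⟩
  have hne : Gammaℝ (1 - z + 1) ≠ 0 := by
    rw [Ne, Gammaℝ_eq_zero_iff]
    rintro ⟨n, hn⟩
    exact hz' (2 * n + 2) (by push_cast; linear_combination -hn)
  have hne' : Gammaℝ (z + 1) ≠ 0 := by
    rw [Ne, Gammaℝ_eq_zero_iff]
    rintro ⟨n, hn⟩
    exact hz' (-(2 * n) - 1) (by push_cast; linear_combination hn)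
  have h := inv_Gammaℝ_two_sub fun n hn => hz' (-n) (by simpa using hn)
  rw [show (2 : ℂ) - z = 1 - z + 1 by ring] at h
  rw [eq_mul_inv_iff_mul_eq₀ hne', inv_mul_eq_iff_eq_mul₀ hne] at h
  rw [G1_eq, zpow_neg_one]
  linear_combination h - Gammaℂ z * sin (π * z / 2) * Gammaℝ (1 - z + 1) * inv_mul_cancel₀ I_ne_zero

lemma Gammaℝ_add_eq_Gd_mul {e d : ℕ} (he : e = 0 ∨ e = 1) (hd : d % 2 = e % 2) {z : ℂ}
    (hz : z ∈ integerComplement) :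
    Gammaℝ (z + e) = I ^ (-(e : ℤ)) * Gd d z * Gammaℝ (1 - z + e) := by
  rw [Gd_eq_of_mod_two_eq hd]
  rcases he with rfl | rfl
  · simpa [Gd] using Gammaℝ_eq_G0_mul hz
  · simpa [Gd] using Gammaℝ_add_one_eq_G1_mul hz

section Casselman

variable {r₁ r₂ : ℕ}

abbrev CasselmanIndex (r₁ r₂ : ℕ) : Type := Fin r₁ ⊕ₗ (Fin r₂ ×ₗ Fin 2)

def casselmanIndexToFin (x : CasselmanIndex r₁ r₂) : Fin (r₁ + 2 * r₂) :=
  match (ofLex x : Fin r₁ ⊕ (Fin r₂ ×ₗ Fin 2)) with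
  | .inl i => ⟨i, by omega⟩
  | .inr jt => ⟨r₁ + 2 * (ofLex jt).1 + (ofLex jt).2, by have := (ofLex jt).1.2; omega⟩

lemma casselmanIndexToFin_strictMono : StrictMono (casselmanIndexToFin (r₁ := r₁) (r₂ := r₂)) := by
  rintro (i | ⟨j, t⟩) (i' | ⟨j', t'⟩) h
  · have h := (Sum.Lex.inl_lt_inl_iff (α := Fin r₁) (β := Fin r₂ ×ₗ Fin 2)).1 h
    exact h
  · change (i : ℕ) < r₁ + 2 * j' + t'
    omega
  · exact absurd h Sum.Lex.not_inr_lt_inl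
  · change r₁ + 2 * (j : ℕ) + t < r₁ + 2 * j' + t'
    have h : toLex (j, t) < toLex (j', t') := Sum.Lex.inr_lt_inr_iff.1 h
    have h := Prod.Lex.toLex_lt_toLex.1 h
    dsimp only at h
    have := t.2
    rcases h with h | ⟨rfl, h⟩ <;> omega

noncomputable def casselmanOrderIso (r₁ r₂ : ℕ) : CasselmanIndex r₁ r₂ ≃o Fin (r₁ + 2 * r₂) :=
  casselmanIndexToFin_strictMono.orderIsoOfSurjective _
    ((Fintype.bijective_iff_injective_and_card _).2
      ⟨casselmanIndexToFin_strictMono.injective, by simp [Fintype.card_lex]; ring⟩).2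

noncomputable def casselmanLam (s1 : Fin r₁ → ℂ) (s2 : Fin r₂ → ℂ) (k : Fin r₂ → ℕ)
    (x : CasselmanIndex r₁ r₂) : ℂ :=
  match (ofLex x : Fin r₁ ⊕ (Fin r₂ ×ₗ Fin 2)) with
  | .inl i => -s1 i
  | .inr jt => ![-s2 (ofLex jt).1 - ((k (ofLex jt).1 : ℂ) - 1) / 2,
      -s2 (ofLex jt).1 + ((k (ofLex jt).1 : ℂ) - 1) / 2] (ofLex jt).2

def casselmanDelta (ε : Fin r₁ → ℕ) (ε' : Fin r₂ → ℕ) (x : CasselmanIndex r₁ r₂) : ℕ :=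
  match (ofLex x : Fin r₁ ⊕ (Fin r₂ ×ₗ Fin 2)) with
  | .inl i => ε i
  | .inr jt => ![ε' (ofLex jt).1, 0] (ofLex jt).2

variable (ε : Fin r₁ → ℕ) (ε' : Fin r₂ → ℕ) (s1 : Fin r₁ → ℂ) (s2 : Fin r₂ → ℂ) (k : Fin r₂ → ℕ)

@[simp] lemma casselmanLam_inl (i : Fin r₁) :
    casselmanLam s1 s2 k (toLex (.inl i)) = -s1 i := rfl

@[simp] lemma casselmanLam_inr_zero (j : Fin r₂) :
    casselmanLam s1 s2 k (toLex (.inr (toLex (j, 0)))) = -s2 j - ((k j : ℂ) - 1) / 2 := rfl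

@[simp] lemma casselmanLam_inr_one (j : Fin r₂) :
    casselmanLam s1 s2 k (toLex (.inr (toLex (j, 1)))) = -s2 j + ((k j : ℂ) - 1) / 2 := rfl

@[simp] lemma casselmanDelta_inl (i : Fin r₁) :
    casselmanDelta (r₂ := r₂) ε ε' (toLex (.inl i)) = ε i := rfl

@[simp] lemma casselmanDelta_inr_zero (j : Fin r₂) :
    casselmanDelta ε ε' (toLex (.inr (toLex (j, 0)))) = ε' j := rfl

@[simp] lemma casselmanDelta_inr_one (j : Fin r₂) :
    casselmanDelta ε ε' (toLex (.inr (toLex (j, 1)))) = 0 := rfl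

end Casselman

lemma prod_zpow_casselman_weight {K : Type*} [CommGroupWithZero K] {z : K} (hz : z ≠ 0)
    (r₁ r₂ : ℕ) (k ε' : Fin r₂ → ℕ) :
    ∏ j : Fin r₂,
        z ^ ((k j : ℤ) * (2 * ((j : ℕ) + 1 : ℤ) - ((r₁ : ℤ) + 2 * (r₂ : ℤ))) - (ε' j : ℤ)) =
      (∏ _i : Fin r₁, ∏ j, z ^ (-(k j : ℤ))) * (∏ j, z ^ (-(ε' j : ℤ))) *
        pairProd (fun j (_ : Fin r₂) => z ^ (-(k j : ℤ)) * z ^ (-(k j : ℤ))) := by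
  rw [pairProd_const_right, prod_comm]
  simp only [prod_const, card_univ, Fintype.card_fin, Fin.card_Ioi, ← prod_mul_distrib]
  refine prod_congr rfl fun j _ => ?_
  simp only [← zpow_natCast, ← zpow_mul, ← zpow_add₀ hz]
  congr 1
  have := j.2
  push_cast [Nat.sub_sub, Nat.cast_sub (show 1 + (j : ℕ) ≤ r₂ by omega)]
  ring

section Blocks

variable {r₁ r₂ : ℕ} {ε : Fin r₁ → ℕ} {ε' : Fin r₂ → ℕ} {E : Fin r₁ → Fin r₁ → ℕ}
  {k : Fin r₂ → ℕ} {s1 : Fin r₁ → ℂ} {s2 : Fin r₂ → ℂ} {s : ℂ}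

lemma pairProd_GammaR_real
    (hE : ∀ i l : Fin r₁, i < l → (E i l = 0 ∨ E i l = 1) ∧ E i l % 2 = (ε i + ε l) % 2)
    (hs : ∀ x y : CasselmanIndex r₁ r₂, x < y →
      s - casselmanLam s1 s2 k x - casselmanLam s1 s2 k y ∈ integerComplement) :
    pairProd (fun i l => GammaR (s + s1 i + s1 l + E i l)) =
      pairProd (fun i l => I ^ (-(E i l : ℤ))) *
        pairProd (fun i l => Gd (ε i + ε l) (s + s1 i + s1 l)) *
        pairProd (fun i l => GammaR (1 - s + -s1 i + -s1 l + E i l)) := by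
  rw [← pairProd_mul, ← pairProd_mul]
  refine pairProd_congr fun i l hil => ?_
  have hz := hs _ _ (Sum.Lex.inl_lt_inl_iff.2 hil)
  simp only [casselmanLam_inl, sub_neg_eq_add] at hz
  rw [GammaR_eq_Gammaℝ, Gammaℝ_add_eq_Gd_mul (hE i l hil).1 (hE i l hil).2.symm hz]
  ring_nf

lemma prod_GammaC_mixed (hk : ∀ j, 1 ≤ k j) (hε' : ∀ j, ε' j % 2 = k j % 2)
    (hs : ∀ x y : CasselmanIndex r₁ r₂, x < y →
      s - casselmanLam s1 s2 k x - casselmanLam s1 s2 k y ∈ integerComplement) :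
    ∏ i, ∏ j, GammaC (s + s1 i + s2 j + ((k j : ℂ) - 1) / 2) =
      (∏ _i : Fin r₁, ∏ j, I ^ (-(k j : ℤ))) *
      (∏ i, ∏ j, Gd (ε i + ε' j) (s + s1 i - (-s2 j - ((k j : ℂ) - 1) / 2)) *
        Gd (ε i) (s + s1 i - (-s2 j + ((k j : ℂ) - 1) / 2))) *
      ∏ i, ∏ j, GammaC (1 - s + -s1 i + -s2 j + ((k j : ℂ) - 1) / 2) := by
  simp only [← prod_mul_distrib]
  refine prod_congr rfl fun i _ => prod_congr rfl fun j _ => ?_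
  have hw := hs _ _ (Sum.Lex.inl_lt_inr i (toLex (j, 1)))
  simp only [casselmanLam_inl, casselmanLam_inr_one, sub_neg_eq_add] at hw
  have h := Gammaℂ_add_sub_one_eq_Gd_mul_Gd (d := ε i + ε' j) (d' := ε i) (hk j)
    (by have := hε' j; omega) hw
  rw [GammaC_eq_Gammaℂ, show s + s1 i + s2 j + ((k j : ℂ) - 1) / 2 =
    s + s1 i - (-s2 j + ((k j : ℂ) - 1) / 2) + (k j - 1) by ring, h]
  ring_nf

lemma prod_GammaR_diag (hε' : ∀ j, ε' j = 0 ∨ ε' j = 1)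
    (hs : ∀ x y : CasselmanIndex r₁ r₂, x < y →
      s - casselmanLam s1 s2 k x - casselmanLam s1 s2 k y ∈ integerComplement) :
    ∏ j, GammaR (s + 2 * s2 j + ε' j) =
      (∏ j, I ^ (-(ε' j : ℤ))) *
      (∏ j, Gd (ε' j) (s - (-s2 j - ((k j : ℂ) - 1) / 2) - (-s2 j + ((k j : ℂ) - 1) / 2))) *
      ∏ j, GammaR (1 - s + 2 * -s2 j + ε' j) := by
  simp only [← prod_mul_distrib]
  refine prod_congr rfl fun j _ => ?_
  have hz := hs (toLex (.inr (toLex (j, 0)))) (toLex (.inr (toLex (j, 1))))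
    (Sum.Lex.inr_lt_inr_iff.2 (Prod.Lex.toLex_lt_toLex.2 (Or.inr ⟨rfl, zero_lt_one⟩)))
  simp only [casselmanLam_inr_zero, casselmanLam_inr_one] at hz
  have h := Gammaℝ_add_eq_Gd_mul (hε' j) rfl hz
  rw [GammaR_eq_Gammaℝ, show s + 2 * s2 j + ε' j =
    s - (-s2 j - ((k j : ℂ) - 1) / 2) - (-s2 j + ((k j : ℂ) - 1) / 2) + ε' j by ring, h]
  ring_nf

lemma pairProd_GammaC_complex (hk : ∀ j, 1 ≤ k j) (hε' : ∀ j, ε' j % 2 = k j % 2)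
    (hs : ∀ x y : CasselmanIndex r₁ r₂, x < y →
      s - casselmanLam s1 s2 k x - casselmanLam s1 s2 k y ∈ integerComplement) :
    pairProd (fun j l => GammaC (s + s2 j + s2 l + ((k j : ℂ) + (k l : ℂ) - 2) / 2) *
        GammaC (s + s2 j + s2 l + ((k j : ℂ) - (k l : ℂ)) / 2)) =
      pairProd (fun j _ => I ^ (-(k j : ℤ)) * I ^ (-(k j : ℤ))) *
      pairProd (fun j l =>
        Gd (ε' j + ε' l) (s - (-s2 j - ((k j : ℂ) - 1) / 2) - (-s2 l - ((k l : ℂ) - 1) / 2)) *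
          Gd (ε' j) (s - (-s2 j - ((k j : ℂ) - 1) / 2) - (-s2 l + ((k l : ℂ) - 1) / 2)) *
        (Gd (ε' l) (s - (-s2 j + ((k j : ℂ) - 1) / 2) - (-s2 l - ((k l : ℂ) - 1) / 2)) *
          Gd 0 (s - (-s2 j + ((k j : ℂ) - 1) / 2) - (-s2 l + ((k l : ℂ) - 1) / 2)))) *
      pairProd (fun j l => GammaC (1 - s + -s2 j + -s2 l + ((k j : ℂ) + (k l : ℂ) - 2) / 2) *
        GammaC (1 - s + -s2 j + -s2 l + ((k j : ℂ) - (k l : ℂ)) / 2)) := by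
  rw [← pairProd_mul, ← pairProd_mul]
  refine pairProd_congr fun j l hjl => ?_
  have hlt : ∀ t u : Fin 2, (toLex (.inr (toLex (j, t))) : CasselmanIndex r₁ r₂) <
      toLex (.inr (toLex (l, u))) := fun t u =>
    Sum.Lex.inr_lt_inr_iff.2 (Prod.Lex.toLex_lt_toLex.2 (Or.inl hjl))
  have hw₁ := hs _ _ (hlt 1 0)
  have hw₂ := hs _ _ (hlt 1 1)
  simp only [casselmanLam_inr_zero, casselmanLam_inr_one] at hw₁ hw₂
  have h₁ := Gammaℂ_add_sub_one_eq_Gd_mul_Gd (d := ε' j + ε' l) (d' := ε' l) (hk j)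
    (by have := hε' j; omega) hw₁
  have h₂ := Gammaℂ_add_sub_one_eq_Gd_mul_Gd (d := ε' j) (d' := 0) (hk j)
    (by have := hε' j; omega) hw₂
  rw [GammaC_eq_Gammaℂ, show s + s2 j + s2 l + ((k j : ℂ) + (k l : ℂ) - 2) / 2 =
      s - (-s2 j + ((k j : ℂ) - 1) / 2) - (-s2 l - ((k l : ℂ) - 1) / 2) + (k j - 1) by ring,
    show s + s2 j + s2 l + ((k j : ℂ) - (k l : ℂ)) / 2 =
      s - (-s2 j + ((k j : ℂ) - 1) / 2) - (-s2 l + ((k l : ℂ) - 1) / 2) + (k j - 1) by ring,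
    h₁, h₂]
  ring_nf

lemma LInf_eq_pairProd :
    LInf r₁ r₂ ε' E k s1 s2 s =
      (∏ j, GammaR (s + 2 * s2 j + ε' j)) *
      (∏ i, ∏ j, GammaC (s + s1 i + s2 j + ((k j : ℂ) - 1) / 2)) *
      pairProd (fun i l => GammaR (s + s1 i + s1 l + E i l)) *
      pairProd (fun j l => GammaC (s + s2 j + s2 l + ((k j : ℂ) + (k l : ℂ) - 2) / 2) *
        GammaC (s + s2 j + s2 l + ((k j : ℂ) - (k l : ℂ)) / 2)) :=
  rfl

theorem LInf_eq_mul_pairProd_casselman (hk : ∀ j, 1 ≤ k j)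
    (hE : ∀ i l : Fin r₁, i < l → (E i l = 0 ∨ E i l = 1) ∧ E i l % 2 = (ε i + ε l) % 2)
    (hε' : ∀ j, (ε' j = 0 ∨ ε' j = 1) ∧ ε' j % 2 = k j % 2)
    (hs : ∀ x y : CasselmanIndex r₁ r₂, x < y →
      s - casselmanLam s1 s2 k x - casselmanLam s1 s2 k y ∈ integerComplement) :
    LInf r₁ r₂ ε' E k s1 s2 s =
      (pairProd (fun i l => I ^ (-(E i l : ℤ))) *
        ∏ j : Fin r₂, I ^ ((k j : ℤ) * (2 * ((j : ℕ) + 1 : ℤ) - ((r₁ : ℤ) + 2 * (r₂ : ℤ)))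
          - (ε' j : ℤ))) *
      LInf r₁ r₂ ε' E k (fun i => -s1 i) (fun j => -s2 j) (1 - s) *
      pairProd (fun x y => Gd (casselmanDelta ε ε' x + casselmanDelta ε ε' y)
        (s - casselmanLam s1 s2 k x - casselmanLam s1 s2 k y)) := by
  rw [pairProd_sumLex, pairProd_prodLex]
  simp only [pairProd_fin_two, Fintype.prod_lex, Fintype.prod_prod_type, Fin.prod_univ_two,
    casselmanLam_inl, casselmanLam_inr_zero, casselmanLam_inr_one, casselmanDelta_inl,
    casselmanDelta_inr_zero, casselmanDelta_inr_one, sub_neg_eq_add, add_zero, zero_add]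
  rw [LInf_eq_pairProd, LInf_eq_pairProd, prod_GammaR_diag (fun j => (hε' j).1) hs,
    prod_GammaC_mixed hk (fun j => (hε' j).2) hs, pairProd_GammaR_real hE hs,
    pairProd_GammaC_complex hk (fun j => (hε' j).2) hs, prod_zpow_casselman_weight I_ne_zero]
  ring

end Blocks

/-- the archimedean functional equation
`L_∞(s) = ω · L̃_∞(1−s) · ∏_{1 ≤ i < j ≤ N} G_{δ_i+δ_j mod 2}(s − λ_i − λ_j)`,
where `N = r₁ + 2r₂`, `λ` and `δ` are the Casselman embedding parameters, and
`ω = ∏_{i<k} i^{−ε_{ik}} · ∏_j i^{k_j(2j−N) − ε′_j}`. -/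
theorem archimedean_functional_equation (r₁ r₂ : ℕ)
    (ε : Fin r₁ → ℕ)
    (k : Fin r₂ → ℕ) (hk2 : ∀ j, 2 ≤ k j)
    (s1 : Fin r₁ → ℂ) (s2 : Fin r₂ → ℂ)
    (E : Fin r₁ → Fin r₁ → ℕ)
    (hE : ∀ i l : Fin r₁, i < l → (E i l = 0 ∨ E i l = 1) ∧ E i l % 2 = (ε i + ε l) % 2)
    (ε' : Fin r₂ → ℕ) (hε' : ∀ j, (ε' j = 0 ∨ ε' j = 1) ∧ ε' j % 2 = k j % 2)
    (lam : Fin (r₁ + 2 * r₂) → ℂ)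
    (hlam1 : ∀ (i : ℕ) (hi : i < r₁), lam ⟨i, by omega⟩ = -s1 ⟨i, hi⟩)
    (hlam2 : ∀ (j : ℕ) (hj : j < r₂),
      lam ⟨r₁ + 2 * j, by omega⟩ = -s2 ⟨j, hj⟩ - ((k ⟨j, hj⟩ : ℂ) - 1) / 2 ∧
      lam ⟨r₁ + 2 * j + 1, by omega⟩ = -s2 ⟨j, hj⟩ + ((k ⟨j, hj⟩ : ℂ) - 1) / 2)
    (δ : Fin (r₁ + 2 * r₂) → ℕ)
    (hδ1 : ∀ (i : ℕ) (hi : i < r₁), δ ⟨i, by omega⟩ = ε ⟨i, hi⟩)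
    (hδ2 : ∀ (j : ℕ) (hj : j < r₂),
      δ ⟨r₁ + 2 * j, by omega⟩ = ε' ⟨j, hj⟩ ∧ δ ⟨r₁ + 2 * j + 1, by omega⟩ = 0)
    (ω : ℂ)
    (hω : ω =
      (∏ p ∈ Finset.univ.filter (fun p : Fin r₁ × Fin r₁ => p.1 < p.2),
        Complex.I ^ (-(E p.1 p.2 : ℤ))) *
      (∏ j : Fin r₂,
        Complex.I ^ ((k j : ℤ) * (2 * ((j : ℕ) + 1 : ℤ) - ((r₁ : ℤ) + 2 * (r₂ : ℤ)))
          - (ε' j : ℤ))))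
    (s : ℂ)
    (hs : ∀ i j : Fin (r₁ + 2 * r₂), i < j → ∀ m : ℤ, s - lam i - lam j ≠ (m : ℂ)) :
    LInf r₁ r₂ ε' E k s1 s2 s =
      ω * LInf r₁ r₂ ε' E k (fun i => -s1 i) (fun j => -s2 j) (1 - s) *
        ∏ p ∈ Finset.univ.filter
            (fun p : Fin (r₁ + 2 * r₂) × Fin (r₁ + 2 * r₂) => p.1 < p.2),
          Gd (δ p.1 + δ p.2) (s - lam p.1 - lam p.2) := by
  have hlam : ∀ x, lam (casselmanOrderIso r₁ r₂ x) = casselmanLam s1 s2 k x := by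
    rintro (i | ⟨j, t⟩)
    · exact hlam1 i i.2
    · fin_cases t
      exacts [(hlam2 j j.2).1, (hlam2 j j.2).2]
  have hδ : ∀ x, δ (casselmanOrderIso r₁ r₂ x) = casselmanDelta ε ε' x := by
    rintro (i | ⟨j, t⟩)
    · exact hδ1 i i.2
    · fin_cases t
      exacts [(hδ2 j j.2).1, (hδ2 j j.2).2]
  have hs' : ∀ x y, x < y →
      s - casselmanLam s1 s2 k x - casselmanLam s1 s2 k y ∈ integerComplement :=
    fun x y hxy ⟨m, hm⟩ =>
      hs _ _ ((casselmanOrderIso r₁ r₂).lt_iff_lt.2 hxy) m (by rw [hlam, hlam, hm])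
  rw [hω, LInf_eq_mul_pairProd_casselman (fun j => by have := hk2 j; omega) hE hε' hs']
  change _ = _ * pairProd (fun a b => Gd (δ a + δ b) (s - lam a - lam b))
  rw [pairProd_orderIso (casselmanOrderIso r₁ r₂)]
  simp only [hlam, hδ]
  rfl
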